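/- arXiv:2205.15084 — 9 statements merged into one kernel-verified Lean document; each statement's English description precedes it below -/
import Mathlib

section
/- Let E be a finite-dimensional real inner product space, γ > 0, and let φ : E → ℝ be lower semicontinuous and γ-weakly convex. Then for every λ ∈ (0, 1/γ): (i) for every x ∈ E the function w ↦ φ(w) + (1/(2λ))‖w − x‖² attains its minimum over E at a unique point, denoted prox_{λφ}(x); (ii) the Moreau envelope φ_λ(x) := min_{w∈E} (φ(w) + (1/(2λ))‖w − x‖²) is differentiable at every x ∈ E with gradient ∇φ_λ(x) = (x − prox_{λφ}(x))/λ. -/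
/-!
For `λ < 1/γ` the proximal objective `w ↦ φ w + ‖w - x‖² / (2λ)` is the convex function
`φ + (γ/2)‖·‖²` plus a `(1/λ - γ)`-strongly convex quadratic, so it is coercive and strictly
convex: it has exactly one minimizer `prox x`, with quadratic growth around it. Writing
`e y` for the envelope, the minimality of `prox x` bounds `e y - e x - ⟪(x - prox x)/λ, y - x⟫`
above by `‖y - x‖²/(2λ)`, and the quadratic growth around `prox x`, evaluated at `prox y`,
bounds it below by a multiple of `-‖y - x‖²`.
-/

open Set Filter Asymptotics
open scoped RealInnerProductSpace

section NormedSpace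

variable {E : Type*} [NormedAddCommGroup E] [NormedSpace ℝ E] {s : Set E} {f : E → ℝ} {m : ℝ}

lemma ConvexOn.exists_sub_mul_norm_le [FiniteDimensional ℝ E] (hf : ConvexOn ℝ univ f) :
    ∃ a b : ℝ, ∀ w, a - b * ‖w‖ ≤ f w := by
  have hcont : Continuous f := continuousOn_univ.mp (hf.continuousOn isOpen_univ)
  obtain ⟨w₀, -, hw₀⟩ := (isCompact_closedBall (0 : E) 1).exists_isMinOn
    ⟨0, Metric.mem_closedBall_self zero_le_one⟩ hcont.continuousOn
  have hA : ∀ w, ‖w‖ ≤ 1 → f w₀ ≤ f w := fun w hw => hw₀ (mem_closedBall_zero_iff.mpr hw)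
  have hA0 : f w₀ ≤ f 0 := hA 0 (by simp)
  refine ⟨f w₀, f 0 - f w₀, fun w => ?_⟩
  rcases le_or_gt ‖w‖ 1 with hw | hw
  · nlinarith [hA w hw, norm_nonneg w]
  -- Compare with the point `w / ‖w‖` of the unit sphere on the segment from `0` to `w`.
  have ht : ‖w‖⁻¹ * ‖w‖ = 1 := inv_mul_cancel₀ (by positivity)
  have hseg := hf.2 (mem_univ 0) (mem_univ w) (sub_nonneg.mpr (inv_le_one_of_one_le₀ hw.le))
    (by positivity : 0 ≤ ‖w‖⁻¹) (sub_add_cancel 1 _)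
  simp only [smul_zero, zero_add, smul_eq_mul] at hseg
  have hsphere : f w₀ ≤ f (‖w‖⁻¹ • w) := hA _ (by rw [norm_smul, norm_inv, norm_norm, ht])
  have := mul_le_mul_of_nonneg_left (hsphere.trans hseg) (norm_nonneg w)
  linear_combination this + hA0 - (f 0 - f w) * ht

lemma StrongConvexOn.add_mul_norm_sub_sq_le_of_isMinOn {p w : E} (hf : StrongConvexOn s m f)
    (hp : IsMinOn f s p) (hps : p ∈ s) (hws : w ∈ s) : f p + m / 4 * ‖w - p‖ ^ 2 ≤ f w := by
  have hhalf : (0 : ℝ) ≤ 1 / 2 := by norm_num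
  have hmid := hf.2 hps hws hhalf hhalf (by norm_num)
  have hmin := isMinOn_iff.mp hp _ (hf.1 hps hws hhalf hhalf (by norm_num))
  simp only [smul_eq_mul] at hmid
  rw [norm_sub_rev] at hmid
  linarith

end NormedSpace

section InnerProductSpace

variable {E : Type*} [NormedAddCommGroup E] [InnerProductSpace ℝ E] {f : E → ℝ} {m : ℝ}

lemma StrongConvexOn.tendsto_cocompact_atTop [FiniteDimensional ℝ E]
    (hf : StrongConvexOn univ m f) (hm : 0 < m) : Tendsto f (cocompact E) atTop := by
  obtain ⟨a, b, hab⟩ := (strongConvexOn_iff_convex.mp hf).exists_sub_mul_norm_le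
  have hquad : Tendsto (fun r : ℝ => r * (m / 2 * r - b) + a) atTop atTop :=
    tendsto_atTop_add_const_right _ a <| tendsto_id.atTop_mul_atTop₀ <|
      tendsto_atTop_add_const_right _ (-b) (tendsto_id.const_mul_atTop (by positivity))
  refine tendsto_atTop_mono (fun w => ?_) (hquad.comp tendsto_norm_cocompact_atTop)
  have hw := hab w
  simp only [Function.comp_apply]
  linarith

lemma StrongConvexOn.exists_isMinOn [FiniteDimensional ℝ E] (hf : StrongConvexOn univ m f)
    (hm : 0 < m) : ∃ p, IsMinOn f univ p := by
  have hcont : Continuous f :=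
    continuousOn_univ.mp ((strongConvexOn_zero.mp (hf.mono hm.le)).continuousOn isOpen_univ)
  obtain ⟨p, hp⟩ := hcont.exists_forall_le (hf.tendsto_cocompact_atTop hm)
  exact ⟨p, fun w _ => hp w⟩

end InnerProductSpace

section Prox

variable {E : Type*} [NormedAddCommGroup E] [InnerProductSpace ℝ E] {φ : E → ℝ} {lam : ℝ}

noncomputable def proxObjective (φ : E → ℝ) (lam : ℝ) (x w : E) : ℝ :=
  φ w + 1 / (2 * lam) * ‖w - x‖ ^ 2

lemma proxObjective_sub_proxObjective (φ : E → ℝ) (lam : ℝ) (x y w : E) :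
    proxObjective φ lam y w - proxObjective φ lam x w =
      lam⁻¹ * ⟪x - w, y - x⟫ + 1 / (2 * lam) * ‖y - x‖ ^ 2 := by
  have h : ‖w - y‖ ^ 2 = ‖w - x‖ ^ 2 - 2 * ⟪w - x, y - x⟫ + ‖y - x‖ ^ 2 := by
    rw [← norm_sub_sq_real, sub_sub_sub_cancel_right]
  rw [proxObjective, proxObjective, h, ← neg_sub w x, inner_neg_left]
  ring

lemma strongConvexOn_proxObjective {γ : ℝ}
    (hφ : ConvexOn ℝ univ fun x => φ x + γ / 2 * ‖x‖ ^ 2) (lam : ℝ) (x : E) :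
    StrongConvexOn univ (1 / lam - γ) (proxObjective φ lam x) := by
  have haffine := ((-lam⁻¹ • innerₛₗ ℝ x).convexOn convex_univ).add_const (‖x‖ ^ 2 / (2 * lam))
  refine strongConvexOn_iff_convex.mpr ((hφ.add haffine).congr fun w _ => ?_)
  simp only [Pi.add_apply, LinearMap.smul_apply, innerₛₗ_apply_apply, smul_eq_mul, proxObjective,
    norm_sub_sq_real, real_inner_comm x w]
  ring

lemma hasGradientAt_proxObjective_prox [CompleteSpace E] (hlam : 0 < lam) {c : ℝ} (hc : 0 < c)
    {p : E → E}
    (hp : ∀ x w, proxObjective φ lam x (p x) + c / 4 * ‖w - p x‖ ^ 2 ≤ proxObjective φ lam x w)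
    (x : E) : HasGradientAt (fun y => proxObjective φ lam y (p y)) (lam⁻¹ • (x - p x)) x := by
  refine hasGradientAt_iff_isLittleO.mpr <| (IsBigO.of_bound (1 / (2 * lam) + lam⁻¹ ^ 2 / c)
    (Eventually.of_forall fun y => ?_)).trans_isLittleO (isLittleO_pow_sub_sub x one_lt_two)
  rw [Real.norm_eq_abs, norm_pow, norm_norm, real_inner_smul_left, abs_le]
  have hx := proxObjective_sub_proxObjective φ lam x y (p x)
  have hy := proxObjective_sub_proxObjective φ lam x y (p y)
  have hshift : ⟪x - p y, y - x⟫ = ⟪x - p x, y - x⟫ - ⟪p y - p x, y - x⟫ := by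
    rw [← inner_sub_left, sub_sub_sub_cancel_right]
  have hcs := mul_le_mul_of_nonneg_left (real_inner_le_norm (p y - p x) (y - x))
    (inv_nonneg.mpr hlam.le)
  have hamgm : lam⁻¹ * (‖p y - p x‖ * ‖y - x‖) ≤
      c / 4 * ‖p y - p x‖ ^ 2 + lam⁻¹ ^ 2 / c * ‖y - x‖ ^ 2 := by
    have hsq : c / 4 * ‖p y - p x‖ ^ 2 + lam⁻¹ ^ 2 / c * ‖y - x‖ ^ 2
        - lam⁻¹ * (‖p y - p x‖ * ‖y - x‖) = (c / 2 * ‖p y - p x‖ - lam⁻¹ * ‖y - x‖) ^ 2 / c := by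
      field_simp
      ring
    have := div_nonneg (sq_nonneg (c / 2 * ‖p y - p x‖ - lam⁻¹ * ‖y - x‖)) hc.le
    linarith
  have hquad : 0 ≤ 1 / (2 * lam) * ‖y - x‖ ^ 2 := by positivity
  have hquad' : 0 ≤ lam⁻¹ ^ 2 / c * ‖y - x‖ ^ 2 := by positivity
  have hgrowth := hp x (p y)
  have hmin : proxObjective φ lam y (p y) ≤ proxObjective φ lam y (p x) :=
    (le_add_of_nonneg_right (by positivity)).trans (hp y (p x))
  rw [hshift, mul_sub] at hy
  constructor <;> linarith

end Prox

theorem moreau_envelope_gradient_general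
    {E : Type*} [NormedAddCommGroup E] [InnerProductSpace ℝ E] [FiniteDimensional ℝ E]
    (γ : ℝ) (φ : E → ℝ)
    (hwc : ConvexOn ℝ Set.univ (fun x => φ x + γ / 2 * ‖x‖ ^ 2))
    (lam : ℝ) (hlam0 : 0 < lam) (hlam1 : lam < 1 / γ) :
    ∃ prox : E → E,
      (∀ x w : E,
        IsMinOn (fun w' => φ w' + 1 / (2 * lam) * ‖w' - x‖ ^ 2) Set.univ w ↔ w = prox x) ∧
      (∀ x : E,
        HasGradientAt (fun x' => ⨅ w : E, (φ w + 1 / (2 * lam) * ‖w - x'‖ ^ 2))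
          (lam⁻¹ • (x - prox x)) x) := by
  have hγ : 0 < γ := one_div_pos.mp (hlam0.trans hlam1)
  have hc : 0 < 1 / lam - γ := sub_pos.mpr ((lt_one_div hlam0 hγ).mp hlam1)
  have hf := strongConvexOn_proxObjective hwc lam
  choose p hp using fun x => (hf x).exists_isMinOn hc
  have hgrowth x w := (hf x).add_mul_norm_sub_sq_le_of_isMinOn (hp x) (mem_univ _) (mem_univ w)
  have henv : (fun x' => ⨅ w : E, (φ w + 1 / (2 * lam) * ‖w - x'‖ ^ 2)) =
      fun y => proxObjective φ lam y (p y) :=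
    funext fun y => IsGLB.ciInf_eq (IsLeast.isGLB ⟨mem_range_self (p y),
      forall_mem_range.mpr fun w => hp y (mem_univ w)⟩)
  refine ⟨p, fun x w => ⟨fun hw => ((hf x).strictConvexOn hc).eq_of_isMinOn hw (hp x)
    (mem_univ w) (mem_univ (p x)), fun h => h ▸ hp x⟩, fun x => ?_⟩
  rw [henv]
  exact hasGradientAt_proxObjective_prox hlam0 hc hgrowth x

/-- For a lower semicontinuous `γ`-weakly convex function `φ` on a finite-dimensional
real inner product space and `λ ∈ (0, 1/γ)`, the proximal map is well defined (unique
minimizer) and the Moreau envelope `φ_λ` is differentiable with gradient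
`∇φ_λ(x) = (x − prox_{λφ}(x))/λ`. -/
theorem moreau_envelope_gradient
    {E : Type*} [NormedAddCommGroup E] [InnerProductSpace ℝ E] [FiniteDimensional ℝ E]
    (γ : ℝ) (hγ : 0 < γ) (φ : E → ℝ)
    (hlsc : LowerSemicontinuous φ)
    (hwc : ConvexOn ℝ Set.univ (fun x => φ x + γ / 2 * ‖x‖ ^ 2))
    (lam : ℝ) (hlam0 : 0 < lam) (hlam1 : lam < 1 / γ) :
    ∃ prox : E → E,
      (∀ x w : E,
        IsMinOn (fun w' => φ w' + 1 / (2 * lam) * ‖w' - x‖ ^ 2) Set.univ w ↔ w = prox x) ∧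
      (∀ x : E,
        HasGradientAt (fun x' => ⨅ w : E, (φ w + 1 / (2 * lam) * ‖w - x'‖ ^ 2))
          (lam⁻¹ • (x - prox x)) x) :=
  moreau_envelope_gradient_general γ φ hwc lam hlam0 hlam1
end

section
/- Let τ, σ > 0, θ, α ≥ 0, ρ ∈ (0,1), μ_x, μ_y, L̄_xx ∈ ℝ and L_yx, L_yy ≥ 0. If the 5×5 matrix G(τ,σ,θ,α,ρ) is positive semidefinite, then the symmetric 3×3 matrix G″ with entries G″₁₁ = (1/σ)(1 − 1/ρ) + μ_y + α/ρ, G″₁₂ = G″₂₁ = −(|1 − θ/ρ| + θ/ρ)·L_yx, G″₁₃ = G″₃₁ = −(|1 − θ/ρ| + θ/ρ)·L_yy, G″₂₂ = 1/τ − L̄_xx, G″₂₃ = G″₃₂ = 0, G″₃₃ = 1/σ − α, is positive semidefinite. -/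
open Matrix

/-- The 5×5 SAPD matrix `G(τ,σ,θ,α,ρ)`. -/
noncomputable def sapdG (τ σ θ α ρ μx μy Lbxx Lyx Lyy : ℝ) : Matrix (Fin 5) (Fin 5) ℝ :=
  !![1/τ * (1 - 1/ρ) + μx/ρ, 0, 0, 0, 0;
     0, 1/σ * (1 - 1/ρ) + μy, (θ/ρ - 1) * Lyx, (θ/ρ - 1) * Lyy, 0;
     0, (θ/ρ - 1) * Lyx, 1/τ - Lbxx, 0, -(θ/ρ) * Lyx;
     0, (θ/ρ - 1) * Lyy, 0, 1/σ - α, -(θ/ρ) * Lyy;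
     0, 0, -(θ/ρ) * Lyx, -(θ/ρ) * Lyy, α/ρ]

/-- The 3×3 matrix `G''` extracted from `G`. -/
noncomputable def sapdG'' (τ σ θ α ρ μx μy Lbxx Lyx Lyy : ℝ) : Matrix (Fin 3) (Fin 3) ℝ :=
  !![1/σ * (1 - 1/ρ) + μy + α/ρ, -(|1 - θ/ρ| + θ/ρ) * Lyx, -(|1 - θ/ρ| + θ/ρ) * Lyy;
     -(|1 - θ/ρ| + θ/ρ) * Lyx, 1/τ - Lbxx, 0;
     -(|1 - θ/ρ| + θ/ρ) * Lyy, 0, 1/σ - α]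

/-- If `G` is positive semidefinite then so is the 3×3 matrix `G''`. -/
theorem sapdG_psd_implies_sapdG''_psd
    (τ σ θ α ρ μx μy Lbxx Lyx Lyy : ℝ)
    (hτ : 0 < τ) (hσ : 0 < σ) (hθ : 0 ≤ θ) (hα : 0 ≤ α)
    (hρ0 : 0 < ρ) (hρ1 : ρ < 1) (hLyx : 0 ≤ Lyx) (hLyy : 0 ≤ Lyy)
    (hG : ∀ v : Fin 5 → ℝ, 0 ≤ v ⬝ᵥ (sapdG τ σ θ α ρ μx μy Lbxx Lyx Lyy *ᵥ v)) :
    ∀ v : Fin 3 → ℝ, 0 ≤ v ⬝ᵥ (sapdG'' τ σ θ α ρ μx μy Lbxx Lyx Lyy *ᵥ v) := by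
  intro v
  rcases le_or_gt (θ/ρ) 1 with hu | hu
  · have habs : |1 - θ/ρ| = 1 - θ/ρ := abs_of_nonneg (by linarith)
    have h5 := hG ![0, v 0, v 1, v 2, v 0]
    simp [sapdG, sapdG'', dotProduct, mulVec, Fin.sum_univ_five,
      Fin.sum_univ_three, habs] at h5 ⊢
    nlinarith [h5]
  · have habs : |1 - θ/ρ| = -(1 - θ/ρ) := abs_of_nonpos (by linarith)
    have h5 := hG ![0, v 0, -v 1, -v 2, -v 0]
    simp [sapdG, sapdG'', dotProduct, mulVec, Fin.sum_univ_five,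
      Fin.sum_univ_three, habs] at h5 ⊢
    nlinarith [h5]
end

section
/- Let μ_x, μ_y > 0, L′_xx > 0, L_yx > 0, L_yy ≥ 0 and β ∈ (0,1). Define θ̄₁(β) = 1 − (β·μ_y·L′_xx/(2·L_yx²))·(√(1 + 4·L_yx²·μ_x/(β·L′_xx²·μ_y)) − 1); define θ̄₂(β) = 1 − ((1−β)²/8)·(μ_y²/L_yy²)·(√(1 + 16·L_yy²/((1−β)²·μ_y²)) − 1) if L_yy > 0 and θ̄₂(β) = 0 if L_yy = 0; and set θ̄(β) = max{θ̄₁(β), θ̄₂(β)}. Then for every θ ∈ (0,1) with θ ≥ θ̄(β), setting τ = (1−θ)/μ_x, σ = (1−θ)/(μ_y·θ), ρ = θ and α = μ_y·θ/(1−θ) − √θ·L_yy, one has α > 0 and the 5×5 matrix G(τ,σ,θ,α,ρ) with L̄_xx = L′_xx is positive semidefinite. -/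
open Matrix

lemma sapdG_quadform (τ σ θ α ρ μx μy Lbxx Lyx Lyy : ℝ) (v : Fin 5 → ℝ) :
    v ⬝ᵥ (sapdG τ σ θ α ρ μx μy Lbxx Lyx Lyy *ᵥ v) =
      (1/τ * (1 - 1/ρ) + μx/ρ) * v 0 ^ 2 + (1/σ * (1 - 1/ρ) + μy) * v 1 ^ 2
      + 2 * ((θ/ρ - 1) * Lyx) * v 1 * v 2 + 2 * ((θ/ρ - 1) * Lyy) * v 1 * v 3
      + (1/τ - Lbxx) * v 2 ^ 2 + 2 * (-(θ/ρ) * Lyx) * v 2 * v 4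
      + (1/σ - α) * v 3 ^ 2 + 2 * (-(θ/ρ) * Lyy) * v 3 * v 4 + (α/ρ) * v 4 ^ 2 := by
  simp [sapdG, Matrix.mulVec, dotProduct, Fin.sum_univ_five,
    Matrix.vecHead, Matrix.vecTail]
  ring

set_option maxHeartbeats 4000000 in
/-- Explicit SAPD parameter choice: for `θ ∈ (0,1)` with `θ ≥ θ̄(β)`, setting
`τ = (1−θ)/μ_x`, `σ = (1−θ)/(μ_y θ)`, `ρ = θ` and `α = μ_y θ/(1−θ) − √θ·L_yy`,
one has `α > 0` and `G` is positive semidefinite. -/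
theorem sapdG_psd_of_theta_bar
    (μx μy L'xx Lyx Lyy β : ℝ)
    (hμx : 0 < μx) (hμy : 0 < μy) (hL'xx : 0 < L'xx) (hLyx : 0 < Lyx) (hLyy : 0 ≤ Lyy)
    (hβ0 : 0 < β) (hβ1 : β < 1)
    (θbar1 θbar2 : ℝ)
    (hθbar1 : θbar1 =
      1 - β * μy * L'xx / (2 * Lyx ^ 2) *
        (Real.sqrt (1 + 4 * Lyx ^ 2 * μx / (β * L'xx ^ 2 * μy)) - 1))
    (hθbar2 : θbar2 =
      if 0 < Lyy then
        1 - (1 - β) ^ 2 / 8 * (μy ^ 2 / Lyy ^ 2) *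
          (Real.sqrt (1 + 16 * Lyy ^ 2 / ((1 - β) ^ 2 * μy ^ 2)) - 1)
      else 0) :
    ∀ θ : ℝ, 0 < θ → θ < 1 → max θbar1 θbar2 ≤ θ →
      0 < μy * θ / (1 - θ) - Real.sqrt θ * Lyy ∧
      ∀ v : Fin 5 → ℝ,
        0 ≤ v ⬝ᵥ (sapdG ((1 - θ) / μx) ((1 - θ) / (μy * θ)) θ
              (μy * θ / (1 - θ) - Real.sqrt θ * Lyy) θ μx μy L'xx Lyx Lyy *ᵥ v) := by
  intro θ hθ0 hθ1 hmax
  obtain ⟨hb1, hb2⟩ := max_le_iff.mp hmax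
  have hs0 : 0 < Real.sqrt θ := Real.sqrt_pos.mpr hθ0
  have hs2 : Real.sqrt θ ^ 2 = θ := Real.sq_sqrt hθ0.le
  set s := Real.sqrt θ with hsdef
  clear_value s
  clear hsdef hmax
  subst hs2
  set t := 1 - s ^ 2 with htdef
  clear_value t
  have ht0 : 0 < t := by rw [htdef]; linarith
  -- consequence of θbar1 ≤ θ
  set r : ℝ := Real.sqrt (1 + 4 * Lyx ^ 2 * μx / (β * L'xx ^ 2 * μy)) with hrdef
  clear_value r
  have hr0 : 0 ≤ r := by rw [hrdef]; positivity
  have hrr : β * L'xx ^ 2 * μy * r ^ 2 = β * L'xx ^ 2 * μy + 4 * Lyx ^ 2 * μx := by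
    rw [hrdef, Real.sq_sqrt (by positivity)]
    field_simp
  have h1' : t ≤ β * μy * L'xx / (2 * Lyx ^ 2) * (r - 1) := by
    rw [hθbar1] at hb1; rw [htdef]; linarith
  have h1 : 2 * Lyx ^ 2 * t ≤ β * μy * L'xx * (r - 1) := by
    calc 2 * Lyx ^ 2 * t ≤ 2 * Lyx ^ 2 * (β * μy * L'xx / (2 * Lyx ^ 2) * (r - 1)) :=
          mul_le_mul_of_nonneg_left h1' (by positivity)
      _ = β * μy * L'xx * (r - 1) := by field_simp
  have hrr2 : β ^ 2 * μy ^ 2 * L'xx ^ 2 * r ^ 2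
      = β ^ 2 * μy ^ 2 * L'xx ^ 2 + 4 * β * μy * Lyx ^ 2 * μx := by
    linear_combination (β * μy) * hrr
  have haux1 : (0:ℝ) ≤ β * μy * L'xx * (r + 1) + 2 * Lyx ^ 2 * t := by
    have e1 : 0 ≤ β * μy * L'xx * (r + 1) :=
      mul_nonneg (by positivity) (by linarith)
    have e2 : 0 ≤ 2 * Lyx ^ 2 * t := by positivity
    linarith
  have haux2 : (0:ℝ) ≤ (β * μy * L'xx * (r - 1) - 2 * Lyx ^ 2 * t) *
      (β * μy * L'xx * (r + 1) + 2 * Lyx ^ 2 * t) :=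
    mul_nonneg (by linarith) haux1
  have hK1 : Lyx ^ 2 * t ^ 2 + β * μy * L'xx * t ≤ β * μy * μx := by
    nlinarith [haux2, hrr2, pow_pos hLyx 2]
  have ha' : 0 < μx - L'xx * t := by
    nlinarith [hK1, mul_pos hβ0 hμy, mul_pos (pow_pos hLyx 2) (pow_pos ht0 2)]
  -- consequence of θbar2 ≤ θ
  have hK2 : 2 * Lyy * t ≤ (1 - β) * μy * s := by
    rcases hLyy.lt_or_eq with hLyy0 | hLyy0
    · rw [hθbar2, if_pos hLyy0] at hb2
      set r2 : ℝ := Real.sqrt (1 + 16 * Lyy ^ 2 / ((1 - β) ^ 2 * μy ^ 2)) with hr2def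
      clear_value r2
      have hr20 : 0 ≤ r2 := by rw [hr2def]; positivity
      have h1mb : (0:ℝ) < 1 - β := by linarith
      have hrr' : (1 - β) ^ 2 * μy ^ 2 * r2 ^ 2 = (1 - β) ^ 2 * μy ^ 2 + 16 * Lyy ^ 2 := by
        rw [hr2def, Real.sq_sqrt (by positivity)]
        field_simp
      have h2' : t ≤ (1 - β) ^ 2 / 8 * (μy ^ 2 / Lyy ^ 2) * (r2 - 1) := by
        rw [htdef]; linarith
      have h2 : 8 * Lyy ^ 2 * t ≤ (1 - β) ^ 2 * μy ^ 2 * (r2 - 1) := by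
        calc 8 * Lyy ^ 2 * t
            ≤ 8 * Lyy ^ 2 * ((1 - β) ^ 2 / 8 * (μy ^ 2 / Lyy ^ 2) * (r2 - 1)) :=
            mul_le_mul_of_nonneg_left h2' (by positivity)
          _ = (1 - β) ^ 2 * μy ^ 2 * (r2 - 1) := by field_simp
      have haux3 : (0:ℝ) ≤ (1 - β) ^ 2 * μy ^ 2 * (r2 + 1) + 8 * Lyy ^ 2 * t := by
        have e1 : 0 ≤ (1 - β) ^ 2 * μy ^ 2 * (r2 + 1) :=
          mul_nonneg (by positivity) (by linarith)
        have e2 : 0 ≤ 8 * Lyy ^ 2 * t := by positivity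
        linarith
      have haux4 : (0:ℝ) ≤ ((1 - β) ^ 2 * μy ^ 2 * (r2 - 1) - 8 * Lyy ^ 2 * t) *
          ((1 - β) ^ 2 * μy ^ 2 * (r2 + 1) + 8 * Lyy ^ 2 * t) :=
        mul_nonneg (by linarith) haux3
      have hrr'2 : (1 - β) ^ 4 * μy ^ 4 * r2 ^ 2
          = (1 - β) ^ 4 * μy ^ 4 + 16 * (1 - β) ^ 2 * μy ^ 2 * Lyy ^ 2 := by
        linear_combination ((1 - β) ^ 2 * μy ^ 2) * hrr'
      have hsq : 4 * Lyy ^ 2 * t ^ 2 ≤ (1 - β) ^ 2 * μy ^ 2 * s ^ 2 := by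
        have h1t : s ^ 2 = 1 - t := by rw [htdef]; ring
        rw [h1t]
        nlinarith [haux4, hrr'2, pow_pos hLyy0 2]
      nlinarith [mul_pos (mul_pos h1mb hμy) hs0, mul_nonneg (mul_nonneg hLyy ht0.le) hs0.le,
        mul_pos ht0 ht0, hsq]
    · rw [← hLyy0]
      have : (0:ℝ) ≤ (1 - β) * μy * s :=
        mul_nonneg (mul_nonneg (by linarith) hμy.le) hs0.le
      linarith
  -- positivity of α
  have hα : 0 < μy * s ^ 2 / t - s * Lyy := by
    rw [sub_pos, lt_div_iff₀ ht0]
    nlinarith [mul_le_mul_of_nonneg_left hK2 hs0.le, mul_pos (mul_pos hβ0 hμy) (mul_pos hs0 hs0),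
      mul_pos hμy (mul_pos hs0 hs0)]
  have h3 : 0 ≤ (μx - L'xx * t) * β * μy - t ^ 2 * Lyx ^ 2 := by nlinarith [hK1]
  have h4 : 0 ≤ s * (1 - β) * μy - 2 * t * Lyy := by nlinarith [hK2]
  refine ⟨hα, fun v => ?_⟩
  have key : (μx - L'xx * t) * (t * s ^ 2) *
      (v ⬝ᵥ (sapdG (t / μx) (t / (μy * s ^ 2)) (s ^ 2)
        (μy * s ^ 2 / t - s * Lyy) (s ^ 2) μx μy L'xx Lyx Lyy *ᵥ v)) =
      Lyy * t * (μx - L'xx * t) * s * (s * v 3 - v 4) ^ 2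
      + s ^ 2 * ((μx - L'xx * t) * v 2 - t * Lyx * v 4) ^ 2
      + s ^ 2 * ((μx - L'xx * t) * β * μy - t ^ 2 * Lyx ^ 2) * v 4 ^ 2
      + (μx - L'xx * t) * s * (s * (1 - β) * μy - 2 * t * Lyy) * v 4 ^ 2 := by
    rw [sapdG_quadform, htdef]
    have hμx' : μx ≠ 0 := hμx.ne'
    have hμy' : μy ≠ 0 := hμy.ne'
    have hs' : s ≠ 0 := hs0.ne'
    have ht' : (1 : ℝ) - s ^ 2 ≠ 0 := by rw [← htdef]; exact ht0.ne'
    field_simp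
    ring
  have hsum : 0 ≤ (μx - L'xx * t) * (t * s ^ 2) *
      (v ⬝ᵥ (sapdG (t / μx) (t / (μy * s ^ 2)) (s ^ 2)
        (μy * s ^ 2 / t - s * Lyy) (s ^ 2) μx μy L'xx Lyx Lyy *ᵥ v)) := by
    rw [key]
    have e1 : 0 ≤ Lyy * t * (μx - L'xx * t) * s * (s * v 3 - v 4) ^ 2 :=
      mul_nonneg (mul_nonneg (mul_nonneg (mul_nonneg hLyy ht0.le) ha'.le) hs0.le) (sq_nonneg _)
    have e2 : 0 ≤ s ^ 2 * ((μx - L'xx * t) * v 2 - t * Lyx * v 4) ^ 2 := by positivity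
    have e3 : 0 ≤ s ^ 2 * ((μx - L'xx * t) * β * μy - t ^ 2 * Lyx ^ 2) * v 4 ^ 2 :=
      mul_nonneg (mul_nonneg (by positivity) h3) (sq_nonneg _)
    have e4 : 0 ≤ (μx - L'xx * t) * s * (s * (1 - β) * μy - 2 * t * Lyy) * v 4 ^ 2 :=
      mul_nonneg (mul_nonneg (mul_nonneg ha'.le hs0.le) h4) (sq_nonneg _)
    exact add_nonneg (add_nonneg (add_nonneg e1 e2) e3) e4
  have hpos : 0 < (μx - L'xx * t) * (t * s ^ 2) := mul_pos ha' (by positivity)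
  exact (mul_nonneg_iff_of_pos_left hpos).mp hsum
end

section
/- Let μ_x, μ_y > 0, L′_xx ≥ 0, L_xy ≥ 0, L_yx > 0, L_yy ≥ 0, integers q ≥ 1 and b_x, b_y ≥ 1. Define L′_x = 2(q−1)·(L′_xx²/(μ_x·b_x) + 10·L_yx²/(μ_y·b_y)) and L′_y = 2(q−1)·(L_xy²/(μ_x·b_x) + 10·L_yy²/(μ_y·b_y)), and set τ = 1/(L_yx + L′_xx + L′_x), σ = 1/(2·L_yy + L_yx + L′_y), θ = 1, ρ = 1, α = L_yx + L_yy. Then the matrix G(τ,σ,θ,α,ρ) with L̄_xx = L′_xx, minus the diagonal matrix diag(μ_x, μ_y, L′_x, L′_y, 0), is positive semidefinite. -/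
open Matrix

/-- VR-SAPD parameter choice: with `θ = ρ = 1`, `α = L_yx + L_yy`, the given
stepsizes `τ, σ`, the matrix `G − diag(μ_x, μ_y, L′_x, L′_y, 0)` is positive
semidefinite. -/
theorem sapdG_VR_psd
    (μx μy L'xx Lxy Lyx Lyy : ℝ) (q bx bY : ℕ)
    (hμx : 0 < μx) (hμy : 0 < μy) (hL'xx : 0 ≤ L'xx) (hLxy : 0 ≤ Lxy)
    (hLyx : 0 < Lyx) (hLyy : 0 ≤ Lyy)
    (hq : 1 ≤ q) (hbx : 1 ≤ bx) (hbY : 1 ≤ bY)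
    (L'x L'y : ℝ)
    (hL'x : L'x = 2 * ((q : ℝ) - 1) * (L'xx ^ 2 / (μx * (bx : ℝ)) + 10 * Lyx ^ 2 / (μy * (bY : ℝ))))
    (hL'y : L'y = 2 * ((q : ℝ) - 1) * (Lxy ^ 2 / (μx * (bx : ℝ)) + 10 * Lyy ^ 2 / (μy * (bY : ℝ)))) :
    ∀ v : Fin 5 → ℝ,
      0 ≤ v ⬝ᵥ ((sapdG (1 / (Lyx + L'xx + L'x)) (1 / (2 * Lyy + Lyx + L'y)) 1
            (Lyx + Lyy) 1 μx μy L'xx Lyx Lyy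
          - Matrix.diagonal ![μx, μy, L'x, L'y, 0]) *ᵥ v) := by
  intro v
  simp [sapdG, Matrix.sub_apply, Matrix.mulVec, dotProduct, Fin.sum_univ_five,
    Matrix.diagonal, Matrix.vecHead, Matrix.vecTail, one_div_one_div]
  nlinarith [hLyx.le, hLyy, sq_nonneg (v 2 - v 4), sq_nonneg (v 3 - v 4)]
end

section
/- Let μ_y > 0, L_yy > 0 and β ∈ (0,1). Define θ̄₂ = 1 − ((1−β)²/8)·(μ_y²/L_yy²)·(√(1 + 16·L_yy²/((1−β)²·μ_y²)) − 1). Then θ̄₂ ∈ [0,1), and for every θ with θ̄₂ ≤ θ < 1 one has (2·L_yy/μ_y)·(1−θ)/√θ ≤ 1 − β. -/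
/-- Dual-stepsize condition: with
`θ̄₂ = 1 − ((1−β)²/8)(μ_y²/L_yy²)(√(1 + 16 L_yy²/((1−β)² μ_y²)) − 1)`,
one has `θ̄₂ ∈ [0,1)` and `(2 L_yy/μ_y)(1−θ)/√θ ≤ 1 − β` for all `θ ∈ [θ̄₂, 1)`. -/
theorem dual_stepsize_condition
    (μy Lyy β : ℝ) (hμy : 0 < μy) (hLyy : 0 < Lyy) (hβ0 : 0 < β) (hβ1 : β < 1)
    (θbar2 : ℝ)
    (hθbar2 : θbar2 =
      1 - (1 - β) ^ 2 / 8 * (μy ^ 2 / Lyy ^ 2) *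
        (Real.sqrt (1 + 16 * Lyy ^ 2 / ((1 - β) ^ 2 * μy ^ 2)) - 1)) :
    (0 ≤ θbar2 ∧ θbar2 < 1) ∧
    ∀ θ : ℝ, θbar2 ≤ θ → θ < 1 →
      2 * Lyy / μy * (1 - θ) / Real.sqrt θ ≤ 1 - β := by
  have hb : 0 < 1 - β := by linarith
  set k := (1 - β) * μy / (2 * Lyy) with hk
  have hk0 : 0 < k := by positivity
  set s := Real.sqrt (k ^ 2 + 4) with hs
  have hs0 : 0 ≤ s := Real.sqrt_nonneg _
  have hs2 : s ^ 2 = k ^ 2 + 4 := Real.sq_sqrt (by positivity)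
  have hsk : k < s := by nlinarith
  have hsk2 : s < k + 2 := by nlinarith
  have harg : 1 + 16 * Lyy ^ 2 / ((1 - β) ^ 2 * μy ^ 2) = (k ^ 2 + 4) / k ^ 2 := by
    rw [hk]
    field_simp
    ring
  have hsqrt : Real.sqrt (1 + 16 * Lyy ^ 2 / ((1 - β) ^ 2 * μy ^ 2)) = s / k := by
    rw [harg, Real.sqrt_div (by positivity), hs, Real.sqrt_sq hk0.le]
  have hkL : (1 - β) ^ 2 * (μy ^ 2 / Lyy ^ 2) = 4 * k ^ 2 := by
    rw [hk]; field_simp; ring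
  have hθb : θbar2 = ((s - k) / 2) ^ 2 := by
    rw [hθbar2, hsqrt]
    have h1 : (1 - β) ^ 2 / 8 * (μy ^ 2 / Lyy ^ 2) * (s / k - 1)
        = (k ^ 2 / 2) * (s / k - 1) := by
      rw [div_mul_eq_mul_div, hkL]; ring
    rw [h1]
    field_simp
    nlinarith [hs2]
  have hθb0 : 0 < θbar2 := by
    rw [hθb]; exact pow_pos (by linarith) 2
  refine ⟨⟨hθb0.le, ?_⟩, ?_⟩
  · rw [hθb]
    nlinarith
  · intro θ hθl hθu
    have hθ0 : 0 < θ := lt_of_lt_of_le hθb0 hθl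
    set t := Real.sqrt θ with ht
    have ht0 : 0 < t := Real.sqrt_pos.mpr hθ0
    have ht2 : t ^ 2 = θ := Real.sq_sqrt hθ0.le
    have htge : (s - k) / 2 ≤ t := by
      have := Real.sqrt_le_sqrt (hθb ▸ hθl)
      rwa [Real.sqrt_sq (by linarith : (0:ℝ) ≤ (s - k) / 2)] at this
    have key : 1 - θ ≤ k * t := by
      have hp : 0 ≤ (t - (s - k) / 2) * (t + (s - k) / 2 + k) :=
        mul_nonneg (by linarith) (by linarith)
      have hexp : (t - (s - k) / 2) * (t + (s - k) / 2 + k) = t ^ 2 + k * t - 1 := by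
        linear_combination (-(1:ℝ)/4) * hs2
      rw [hexp] at hp
      linarith [ht2]
    rw [div_le_iff₀ ht0, div_mul_eq_mul_div, div_le_iff₀ hμy]
    have hkeq : (1 - β) * μy = 2 * Lyy * k := by rw [hk]; field_simp
    have h2 : (1 - β) * t * μy = 2 * Lyy * (k * t) := by linear_combination t * hkeq
    have h3 : 2 * Lyy * (1 - θ) ≤ 2 * Lyy * (k * t) :=
      mul_le_mul_of_nonneg_left key (by positivity)
    linarith
end

section
/- Let μ_x, μ_y > 0, L′_xx > 0, L_yx > 0 and β ∈ (0,1]. Define θ̄₁ = 1 − (β·μ_y·L′_xx/(2·L_yx²))·(√(1 + 4·L_yx²·μ_x/(β·L′_xx²·μ_y)) − 1). Then for every θ ∈ (0,1) with θ ≥ θ̄₁ one has μ_x/(1−θ) − L′_xx ≥ (1−θ)·L_yx²/(β·μ_y). -/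
/-! With `t = 1 - θ` and `a = L_yx² / (β μ_y)`, the claim reads `a t ≤ μ_x / t - L′_xx`, i.e.
`a t² + L′_xx t ≤ μ_x`, and `1 - θ̄₁` is exactly the positive root of `a t² + L′_xx t = μ_x`. -/

lemma mul_sq_add_mul_le_of_le_sqrt {a b c t : ℝ} (ha : 0 < a) (hdisc : 0 ≤ b ^ 2 + 4 * a * c)
    (ht : 0 ≤ 2 * a * t + b) (h : 2 * a * t + b ≤ √(b ^ 2 + 4 * a * c)) :
    a * t ^ 2 + b * t ≤ c := by
  have hsq := (Real.le_sqrt ht hdisc).1 h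
  nlinarith

lemma mul_sqrt_one_add_div_sq {b : ℝ} (hb : 0 < b) (x : ℝ) :
    b * √(1 + x / b ^ 2) = √(b ^ 2 + x) := by
  rw [show 1 + x / b ^ 2 = (b ^ 2 + x) / b ^ 2 by field_simp, Real.sqrt_div' _ (by positivity),
    Real.sqrt_sq hb.le]
  field_simp

lemma mul_le_div_sub_of_le_pos_root {a b c t : ℝ} (ha : 0 < a) (hb : 0 < b) (hc : 0 ≤ c)
    (ht : 0 < t) (h : t ≤ b / (2 * a) * (√(1 + 4 * a * c / b ^ 2) - 1)) :
    a * t ≤ c / t - b := by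
  have hroot : 2 * a * t + b ≤ √(b ^ 2 + 4 * a * c) := by
    rw [← mul_sqrt_one_add_div_sq hb]
    rw [show b / (2 * a) * (√(1 + 4 * a * c / b ^ 2) - 1)
        = (b * √(1 + 4 * a * c / b ^ 2) - b) / (2 * a) by field_simp] at h
    rw [le_div_iff₀ (by positivity)] at h
    linarith
  have hquad := mul_sq_add_mul_le_of_le_sqrt ha (by positivity) (by positivity) hroot
  rw [le_sub_iff_add_le, le_div_iff₀ ht]
  linarith

theorem primal_stepsize_condition_general
    (μx μy L'xx Lyx β : ℝ)
    (hμx : 0 < μx) (hμy : 0 < μy) (hL'xx : 0 < L'xx) (hLyx : 0 < Lyx)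
    (hβ0 : 0 < β)
    (θbar1 : ℝ)
    (hθbar1 : θbar1 =
      1 - β * μy * L'xx / (2 * Lyx ^ 2) *
        (Real.sqrt (1 + 4 * Lyx ^ 2 * μx / (β * L'xx ^ 2 * μy)) - 1)) :
    ∀ θ : ℝ, 0 < θ → θ < 1 → θbar1 ≤ θ →
      (1 - θ) * Lyx ^ 2 / (β * μy) ≤ μx / (1 - θ) - L'xx := by
  intro θ _ hθ1 hθ
  have hcoef : β * μy * L'xx / (2 * Lyx ^ 2) = L'xx / (2 * (Lyx ^ 2 / (β * μy))) := by
    field_simp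
  have hrad : 4 * Lyx ^ 2 * μx / (β * L'xx ^ 2 * μy) = 4 * (Lyx ^ 2 / (β * μy)) * μx / L'xx ^ 2 := by
    field_simp
  rw [hθbar1, hcoef, hrad] at hθ
  have key := mul_le_div_sub_of_le_pos_root (a := Lyx ^ 2 / (β * μy)) (by positivity) hL'xx hμx.le
    (sub_pos.2 hθ1) (by linarith)
  calc (1 - θ) * Lyx ^ 2 / (β * μy) = Lyx ^ 2 / (β * μy) * (1 - θ) := by ring
    _ ≤ μx / (1 - θ) - L'xx := key

/-- Primal-stepsize condition: with
`θ̄₁ = 1 − (β μ_y L′_xx/(2 L_yx²))(√(1 + 4 L_yx² μ_x/(β L′_xx² μ_y)) − 1)`,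
every `θ ∈ (0,1)` with `θ ≥ θ̄₁` satisfies
`μ_x/(1−θ) − L′_xx ≥ (1−θ) L_yx²/(β μ_y)`. -/
theorem primal_stepsize_condition
    (μx μy L'xx Lyx β : ℝ)
    (hμx : 0 < μx) (hμy : 0 < μy) (hL'xx : 0 < L'xx) (hLyx : 0 < Lyx)
    (hβ0 : 0 < β) (hβ1 : β ≤ 1)
    (θbar1 : ℝ)
    (hθbar1 : θbar1 =
      1 - β * μy * L'xx / (2 * Lyx ^ 2) *
        (Real.sqrt (1 + 4 * Lyx ^ 2 * μx / (β * L'xx ^ 2 * μy)) - 1)) :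
    ∀ θ : ℝ, 0 < θ → θ < 1 → θbar1 ≤ θ →
      (1 - θ) * Lyx ^ 2 / (β * μy) ≤ μx / (1 - θ) - L'xx :=
  primal_stepsize_condition_general μx μy L'xx Lyx β hμx hμy hL'xx hLyx hβ0 θbar1 hθbar1
end

section
/- Let F be a finite-dimensional real inner product space, Y ⊆ F a nonempty convex set, g : F → ℝ convex, L > 0, and h : F → ℝ a concave differentiable function whose gradient is L-Lipschitz, i.e., ‖∇h(y) − ∇h(y′)‖ ≤ L‖y − y′‖ for all y, y′ ∈ F. Let ŷ ∈ Y and let y⁺ be a minimizer over Y of w ↦ g(w) − ⟨∇h(ŷ), w⟩ + (L/2)‖w − ŷ‖². Then for every ỹ ∈ Y: (h(ỹ) − g(ỹ)) − (h(y⁺) − g(y⁺)) ≤ L·‖ỹ − ŷ‖·‖y⁺ − ŷ‖. Consequently, if ‖y₁ − y₂‖ ≤ D for all y₁, y₂ ∈ Y and the supremum is attained, then sup_{y∈Y}(h(y) − g(y)) − (h(y⁺) − g(y⁺)) ≤ L·D·‖y⁺ − ŷ‖. -/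
open RealInnerProductSpace

/-!
Concavity bounds `h ỹ` above by the tangent plane of `h` at `ŷ`; the Lipschitz gradient bounds
`h y⁺` below by the same tangent plane minus `L‖y⁺ − ŷ‖²`; and the first-order optimality condition
of the proximal step, `g y⁺ ≤ g ỹ − ⟪∇h ŷ, ỹ − y⁺⟫ + L⟪y⁺ − ŷ, ỹ − y⁺⟫`, bounds `g y⁺`. Adding the
three, all linear terms cancel and the gap is at most `L⟪y⁺ − ŷ, ỹ − ŷ⟫`, to which Cauchy–Schwarz
applies.
-/

lemma le_of_forall_mem_Ioc_le_add_mul {a b c : ℝ} (h : ∀ t ∈ Set.Ioc (0 : ℝ) 1, a ≤ b + t * c) :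
    a ≤ b := by
  have hlim : Filter.Tendsto (fun t : ℝ => b + t * c) (nhdsWithin 0 (Set.Ioi 0)) (nhds b) := by
    refine ((continuous_const.add (continuous_id.mul continuous_const)).tendsto' 0 b ?_).mono_left
      nhdsWithin_le_nhds
    simp
  exact ge_of_tendsto hlim (Filter.eventually_of_mem (Ioc_mem_nhdsGT one_pos) h)

theorem ConcaveOn.le_add_of_hasFDerivAt {E : Type*} [NormedAddCommGroup E] [NormedSpace ℝ E]
    {s : Set E} {h : E → ℝ} {f' : E →L[ℝ] ℝ} {x y : E}
    (hh : ConcaveOn ℝ s h) (hx : x ∈ s) (hy : y ∈ s) (hf' : HasFDerivAt h f' x) :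
    h y ≤ h x + f' (y - x) := by
  let ℓ : ℝ →ᵃ[ℝ] E := AffineMap.lineMap x y
  have hline : ConcaveOn ℝ (ℓ ⁻¹' s) (h ∘ ℓ) := hh.comp_affineMap ℓ
  have hℓ0 : ℓ 0 = x := AffineMap.lineMap_apply_zero x y
  have hℓ1 : ℓ 1 = y := AffineMap.lineMap_apply_one x y
  have hderiv : HasDerivAt (h ∘ ℓ) (f' (y - x)) 0 :=
    hf'.comp_hasDerivAt_of_eq (0 : ℝ) AffineMap.hasDerivAt_lineMap hℓ0.symm
  have hslope := hline.slope_le_of_hasDerivAt (x := 0) (y := 1) (by simpa [hℓ0] using hx)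
    (by simpa [hℓ1] using hy) one_pos hderiv
  rw [slope_def_field, Function.comp_apply, Function.comp_apply, hℓ0, hℓ1, sub_zero, div_one]
    at hslope
  linarith

section Gradient

variable {F : Type*} [NormedAddCommGroup F] [InnerProductSpace ℝ F]

theorem ConcaveOn.le_add_inner_gradient [CompleteSpace F] {s : Set F} {h : F → ℝ} {x y : F}
    (hh : ConcaveOn ℝ s h) (hx : x ∈ s) (hy : y ∈ s) (hd : DifferentiableAt ℝ h x) :
    h y ≤ h x + ⟪gradient h x, y - x⟫ :=
  hh.le_add_of_hasFDerivAt hx hy hd.hasGradientAt.hasFDerivAt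

theorem abs_sub_sub_inner_gradient_le [CompleteSpace F] {h : F → ℝ} {L : ℝ} (hL : 0 ≤ L)
    (hd : Differentiable ℝ h) (hlip : ∀ y y' : F, ‖gradient h y - gradient h y'‖ ≤ L * ‖y - y'‖)
    (x y : F) : |h y - h x - ⟪gradient h x, y - x⟫| ≤ L * ‖y - x‖ ^ 2 := by
  have hbound : ∀ z ∈ Metric.closedBall x ‖y - x‖,
      ‖InnerProductSpace.toDual ℝ F (gradient h z) - InnerProductSpace.toDual ℝ F (gradient h x)‖
        ≤ L * ‖y - x‖ := by
    intro z hz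
    rw [← map_sub, LinearIsometryEquiv.norm_map]
    rw [Metric.mem_closedBall, dist_eq_norm] at hz
    exact (hlip z x).trans (mul_le_mul_of_nonneg_left hz hL)
  have := (convex_closedBall x ‖y - x‖).norm_image_sub_le_of_norm_hasFDerivWithin_le'
    (fun z _ => (hd z).hasGradientAt.hasFDerivAt.hasFDerivWithinAt) hbound
    (Metric.mem_closedBall_self (norm_nonneg _)) (y := y) (by simp [dist_eq_norm])
  rw [← Real.norm_eq_abs, sq, ← mul_assoc]
  exact this

theorem IsMinOn.le_add_inner_of_prox {Y : Set F} {g : F → ℝ} {a c p w : F} {L : ℝ}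
    (hmin : IsMinOn (fun w => g w - ⟪a, w⟫ + L / 2 * ‖w - c‖ ^ 2) Y p) (hg : ConvexOn ℝ Y g)
    (hp : p ∈ Y) (hw : w ∈ Y) :
    g p ≤ g w - ⟪a, w - p⟫ + L * ⟪p - c, w - p⟫ := by
  refine le_of_forall_mem_Ioc_le_add_mul (c := L / 2 * ‖w - p‖ ^ 2) fun t ⟨ht0, ht1⟩ => ?_
  have hconv : g (p + t • (w - p)) ≤ (1 - t) * g p + t * g w := by
    have hcomb : (1 - t) • p + t • w = p + t • (w - p) := by module
    simpa [hcomb] using hg.2 hp hw (sub_nonneg.2 ht1) ht0.le (by ring)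
  have hopt := isMinOn_iff.mp hmin _ (hg.1.add_smul_sub_mem hp hw ⟨ht0.le, ht1⟩)
  have hnorm : ‖p + t • (w - p) - c‖ ^ 2
      = ‖p - c‖ ^ 2 + 2 * t * ⟪p - c, w - p⟫ + t ^ 2 * ‖w - p‖ ^ 2 := by
    rw [show p + t • (w - p) - c = (p - c) + t • (w - p) by abel, norm_add_sq_real,
      real_inner_smul_right, norm_smul, mul_pow, Real.norm_eq_abs, sq_abs]
    ring
  rw [hnorm, inner_add_right, real_inner_smul_right] at hopt
  refine le_of_mul_le_mul_left ?_ ht0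
  linarith

theorem prox_grad_gap_le_inner [CompleteSpace F] {Y : Set F} {g h : F → ℝ} {L : ℝ}
    {yhat yplus ytil : F}
    (hg : ConvexOn ℝ Y g) (hh : ConcaveOn ℝ Y h) (hL : 0 ≤ L) (hd : Differentiable ℝ h)
    (hlip : ∀ y y' : F, ‖gradient h y - gradient h y'‖ ≤ L * ‖y - y'‖)
    (hyhat : yhat ∈ Y) (hyplus : yplus ∈ Y) (hytil : ytil ∈ Y)
    (hmin : IsMinOn (fun w => g w - ⟪gradient h yhat, w⟫ + L / 2 * ‖w - yhat‖ ^ 2) Y yplus) :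
    (h ytil - g ytil) - (h yplus - g yplus) ≤ L * ⟪yplus - yhat, ytil - yhat⟫ := by
  have hupper := hh.le_add_inner_gradient hyhat hytil (hd yhat)
  have hlower := (abs_le.mp (abs_sub_sub_inner_gradient_le hL hd hlip yhat yplus)).1
  have hprox := hmin.le_add_inner_of_prox hg hyplus hytil
  have hsplit : ytil - yhat = (ytil - yplus) + (yplus - yhat) := by abel
  rw [hsplit, inner_add_right] at hupper
  rw [hsplit, inner_add_right, real_inner_self_eq_norm_sq]
  linarith

end Gradient

theorem concave_prox_grad_gap_general
    {F : Type*} [NormedAddCommGroup F] [InnerProductSpace ℝ F] [FiniteDimensional ℝ F]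
    (Y : Set F) (hYconv : Convex ℝ Y)
    (g h : F → ℝ) (hg : ConvexOn ℝ Set.univ g)
    (L : ℝ) (hL : 0 < L)
    (hconc : ConcaveOn ℝ Set.univ h) (hdiff : Differentiable ℝ h)
    (hlip : ∀ y y' : F, ‖gradient h y - gradient h y'‖ ≤ L * ‖y - y'‖)
    (yhat : F) (hyhatY : yhat ∈ Y)
    (yplus : F) (hyplusY : yplus ∈ Y)
    (hyplus : IsMinOn (fun w => g w - ⟪gradient h yhat, w⟫ + L / 2 * ‖w - yhat‖ ^ 2)
      Y yplus) :
    (∀ ytil ∈ Y,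
      (h ytil - g ytil) - (h yplus - g yplus) ≤ L * ‖ytil - yhat‖ * ‖yplus - yhat‖) ∧
    ∀ D : ℝ, (∀ y₁ ∈ Y, ∀ y₂ ∈ Y, ‖y₁ - y₂‖ ≤ D) →
      ∀ ymax ∈ Y, IsMaxOn (fun y => h y - g y) Y ymax →
        (h ymax - g ymax) - (h yplus - g yplus) ≤ L * D * ‖yplus - yhat‖ := by
  have gap (ytil : F) (hytil : ytil ∈ Y) :
      (h ytil - g ytil) - (h yplus - g yplus) ≤ L * ‖ytil - yhat‖ * ‖yplus - yhat‖ :=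
    calc (h ytil - g ytil) - (h yplus - g yplus) ≤ L * ⟪yplus - yhat, ytil - yhat⟫ :=
          prox_grad_gap_le_inner (hg.subset (Set.subset_univ Y) hYconv)
            (hconc.subset (Set.subset_univ Y) hYconv) hL.le hdiff hlip hyhatY hyplusY hytil hyplus
      _ ≤ L * (‖yplus - yhat‖ * ‖ytil - yhat‖) := by gcongr; exact real_inner_le_norm _ _
      _ = L * ‖ytil - yhat‖ * ‖yplus - yhat‖ := by ring
  refine ⟨gap, fun D hD ymax hymax _ => (gap ymax hymax).trans ?_⟩
  gcongr
  exact hD ymax hymax yhat hyhatY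

/-- Proximal-gradient gap bound for a concave smooth `h` minus convex `g`:
if `y⁺` minimizes `w ↦ g(w) − ⟨∇h(ŷ), w⟩ + (L/2)‖w − ŷ‖²` over `Y`, then for all
`ỹ ∈ Y`, `(h(ỹ) − g(ỹ)) − (h(y⁺) − g(y⁺)) ≤ L‖ỹ − ŷ‖‖y⁺ − ŷ‖`; and when `Y` has
diameter ≤ D and the supremum is attained,
`sup_{y∈Y}(h − g) − (h(y⁺) − g(y⁺)) ≤ L·D·‖y⁺ − ŷ‖`. -/
theorem concave_prox_grad_gap
    {F : Type*} [NormedAddCommGroup F] [InnerProductSpace ℝ F] [FiniteDimensional ℝ F]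
    (Y : Set F) (hYne : Y.Nonempty) (hYconv : Convex ℝ Y)
    (g h : F → ℝ) (hg : ConvexOn ℝ Set.univ g)
    (L : ℝ) (hL : 0 < L)
    (hconc : ConcaveOn ℝ Set.univ h) (hdiff : Differentiable ℝ h)
    (hlip : ∀ y y' : F, ‖gradient h y - gradient h y'‖ ≤ L * ‖y - y'‖)
    (yhat : F) (hyhatY : yhat ∈ Y)
    (yplus : F) (hyplusY : yplus ∈ Y)
    (hyplus : IsMinOn (fun w => g w - ⟪gradient h yhat, w⟫ + L / 2 * ‖w - yhat‖ ^ 2)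
      Y yplus) :
    (∀ ytil ∈ Y,
      (h ytil - g ytil) - (h yplus - g yplus) ≤ L * ‖ytil - yhat‖ * ‖yplus - yhat‖) ∧
    ∀ D : ℝ, (∀ y₁ ∈ Y, ∀ y₂ ∈ Y, ‖y₁ - y₂‖ ≤ D) →
      ∀ ymax ∈ Y, IsMaxOn (fun y => h y - g y) Y ymax →
        (h ymax - g ymax) - (h yplus - g yplus) ≤ L * D * ‖yplus - yhat‖ :=
  concave_prox_grad_gap_general Y hYconv g h hg L hL hconc hdiff hlip yhat hyhatY yplus hyplusY
    hyplus
end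

section
/- Let E, F be finite-dimensional real inner product spaces, f : E → ℝ convex and lower semicontinuous, λ > 0, ε > 0, constants L_xx, L_xy, L_yx ≥ 0 and μ_y > 0. Let Φ : E × F → ℝ satisfy ‖∇_xΦ(x,y) − ∇_xΦ(x′,y′)‖ ≤ L_xx‖x−x′‖ + L_xy‖y−y′‖ for all x,x′ ∈ E, y,y′ ∈ F; let y_* : E → F satisfy ‖y_*(x) − y_*(x′)‖ ≤ (L_yx/μ_y)‖x−x′‖ for all x,x′ ∈ E; and let φˢ : E → ℝ be differentiable with ∇φˢ(x) = ∇_xΦ(x, y_*(x)) for every x ∈ E. Suppose x_ε, x̂ ∈ E satisfy x̂ = prox_{λf}(x_ε − λ∇φˢ(x̂)) and ‖x_ε − x̂‖ ≤ λε/2. Then for every x̃ ∈ E: (1/λ)·‖x̃ − prox_{λf}(x̃ − λ∇φˢ(x̃))‖ ≤ (2/λ + L_xx + L_xy·L_yx/μ_y)·‖x̃ − x̂‖ + ε/2. -/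
/-!
Adding the variational inequalities that characterise two proximal points of a convex
function shows that `prox_{λf}` is nonexpansive, and `∇φˢ` is `(L_xx + L_xy L_yx/μ_y)`-Lipschitz
through `y_*`. Writing `x̂ = prox_{λf}(x_ε − λ∇φˢ(x̂))`, the distance from `x̂` to
`prox_{λf}(x̃ − λ∇φˢ(x̃))` is therefore at most
`‖x_ε − x̂‖ + ‖x̂ − x̃‖ + λ‖∇φˢ(x̂) − ∇φˢ(x̃)‖`, and the triangle inequality through `x̂` does
the rest.
-/

open Filter Topology RealInnerProductSpace

theorem norm_sub_le_of_lipschitz_comp {X Y Z : Type*} [SeminormedAddCommGroup X]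
    [SeminormedAddCommGroup Y] [SeminormedAddCommGroup Z] {G : X → Y → Z} {h : X → Y}
    {a b K : ℝ} (hb : 0 ≤ b)
    (hG : ∀ x x' y y', ‖G x y - G x' y'‖ ≤ a * ‖x - x'‖ + b * ‖y - y'‖)
    (hh : ∀ x x', ‖h x - h x'‖ ≤ K * ‖x - x'‖) (x x' : X) :
    ‖G x (h x) - G x' (h x')‖ ≤ (a + b * K) * ‖x - x'‖ :=
  calc ‖G x (h x) - G x' (h x')‖ ≤ a * ‖x - x'‖ + b * ‖h x - h x'‖ := hG _ _ _ _
    _ ≤ a * ‖x - x'‖ + b * (K * ‖x - x'‖) := by gcongr; exact hh x x'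
    _ = (a + b * K) * ‖x - x'‖ := by ring

section ProximalGradient

variable {E : Type*} [NormedAddCommGroup E] [InnerProductSpace ℝ E]

def IsProxPoint (f : E → ℝ) (t : ℝ) (z p : E) : Prop :=
  IsMinOn (fun w => f w + 1 / (2 * t) * ‖w - z‖ ^ 2) Set.univ p

namespace IsProxPoint

variable {f : E → ℝ} {t : ℝ} {z z' p q : E}

/-- Minimality along the segment from `p` to `w`, after dividing by its length `s`,
leaves an error term `s ‖w - p‖² / 2` that vanishes as `s → 0⁺`. -/
theorem inner_le (hf : ConvexOn ℝ Set.univ f) (ht : 0 < t) (hp : IsProxPoint f t z p)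
    (w : E) : ⟪z - p, w - p⟫ ≤ t * (f w - f p) := by
  have along_segment : ∀ s ∈ Set.Ioo (0 : ℝ) 1,
      ⟪z - p, w - p⟫ ≤ t * (f w - f p) + s * (‖w - p‖ ^ 2 / 2) := by
    rintro s ⟨hs0, hs1⟩
    have hmin := hp (Set.mem_univ (p + s • (w - p)))
    have hconv : f (p + s • (w - p)) ≤ (1 - s) * f p + s * f w := by
      have h := hf.2 (Set.mem_univ p) (Set.mem_univ w) (sub_nonneg.2 hs1.le) hs0.le
        (sub_add_cancel 1 s)
      rwa [show (1 - s) • p + s • w = p + s • (w - p) by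
        rw [smul_sub, sub_smul, one_smul]; abel, smul_eq_mul, smul_eq_mul] at h
    have hsq : ‖p + s • (w - p) - z‖ ^ 2
        = ‖z - p‖ ^ 2 - 2 * (s * ⟪z - p, w - p⟫) + s ^ 2 * ‖w - p‖ ^ 2 := by
      rw [show p + s • (w - p) - z = s • (w - p) - (z - p) by abel, norm_sub_sq_real,
        norm_smul, real_inner_smul_left, real_inner_comm, Real.norm_eq_abs, mul_pow, sq_abs]
      ring
    simp only [Set.mem_ofPred_eq, hsq, norm_sub_rev p z] at hmin
    have hscaled :
        s * ⟪z - p, w - p⟫ ≤ s * (t * (f w - f p) + s * (‖w - p‖ ^ 2 / 2)) := by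
      have h2t : 1 / (2 * t) * (2 * t) = 1 := by field_simp
      nlinarith [mul_le_mul_of_nonneg_right (hmin.trans (add_le_add_left hconv _))
        (by positivity : (0 : ℝ) ≤ 2 * t)]
    exact le_of_mul_le_mul_left hscaled hs0
  have hlim : Tendsto (fun s : ℝ => t * (f w - f p) + s * (‖w - p‖ ^ 2 / 2)) (𝓝[>] 0)
      (𝓝 (t * (f w - f p))) := by
    have : Continuous (fun s : ℝ => t * (f w - f p) + s * (‖w - p‖ ^ 2 / 2)) := by fun_prop
    simpa using this.continuousWithinAt.tendsto (x := 0) (s := Set.Ioi 0)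
  exact ge_of_tendsto hlim (eventually_of_mem (Ioo_mem_nhdsGT one_pos) along_segment)

theorem norm_sub_sq_le_inner (hf : ConvexOn ℝ Set.univ f) (ht : 0 < t)
    (hp : IsProxPoint f t z p) (hq : IsProxPoint f t z' q) :
    ‖p - q‖ ^ 2 ≤ ⟪z - z', p - q⟫ := by
  have hpq := hp.inner_le hf ht q
  have hqp := hq.inner_le hf ht p
  have hsum : ⟪z - p, q - p⟫ + ⟪z' - q, p - q⟫ = ‖p - q‖ ^ 2 - ⟪z - z', p - q⟫ := by
    rw [← real_inner_self_eq_norm_sq]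
    simp only [inner_sub_left, inner_sub_right, real_inner_comm p q]
    ring
  linarith

theorem norm_sub_le (hf : ConvexOn ℝ Set.univ f) (ht : 0 < t)
    (hp : IsProxPoint f t z p) (hq : IsProxPoint f t z' q) : ‖p - q‖ ≤ ‖z - z'‖ := by
  have h := (hp.norm_sub_sq_le_inner hf ht hq).trans (real_inner_le_norm _ _)
  nlinarith [norm_nonneg (p - q), norm_nonneg (z - z')]

end IsProxPoint

theorem lipschitzWith_one_of_isProxPoint {f : E → ℝ} {t : ℝ} {prox : E → E}
    (hf : ConvexOn ℝ Set.univ f) (ht : 0 < t) (hprox : ∀ z, IsProxPoint f t z (prox z)) :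
    LipschitzWith 1 prox :=
  LipschitzWith.of_dist_le_mul fun z z' => by
    simpa [dist_eq_norm] using (hprox z).norm_sub_le hf ht (hprox z')

theorem norm_sub_forwardBackward_le {T g : E → E} {lam C : ℝ} (hT : LipschitzWith 1 T)
    (hg : ∀ x x', ‖g x - g x'‖ ≤ C * ‖x - x'‖) (hlam : 0 ≤ lam) {xε xhat : E}
    (hfix : xhat = T (xε - lam • g xhat)) (x : E) :
    ‖x - T (x - lam • g x)‖ ≤ (2 + lam * C) * ‖x - xhat‖ + ‖xε - xhat‖ := by
  have hstep : ‖(xε - lam • g xhat) - (x - lam • g x)‖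
      ≤ ‖xε - xhat‖ + ‖xhat - x‖ + lam * ‖g xhat - g x‖ := by
    rw [show (xε - lam • g xhat) - (x - lam • g x)
        = (xε - xhat) + (xhat - x) - lam • (g xhat - g x) by rw [smul_sub]; abel]
    refine (norm_sub_le _ _).trans ?_
    rw [norm_smul, Real.norm_of_nonneg hlam]
    gcongr
    exact norm_add_le _ _
  have hgrad := mul_le_mul_of_nonneg_left (hg xhat x) hlam
  rw [norm_sub_rev xhat x] at hstep hgrad
  calc ‖x - T (x - lam • g x)‖ ≤ ‖x - xhat‖ + ‖xhat - T (x - lam • g x)‖ :=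
        norm_sub_le_norm_sub_add_norm_sub _ _ _
    _ ≤ ‖x - xhat‖ + ‖(xε - lam • g xhat) - (x - lam • g x)‖ := by
      nth_rewrite 2 [hfix]
      simpa using hT.norm_sub_le (xε - lam • g xhat) (x - lam • g x)
    _ ≤ (2 + lam * C) * ‖x - xhat‖ + ‖xε - xhat‖ := by linarith

end ProximalGradient

theorem generalized_gradient_mapping_bound_general
    {E F : Type*} [NormedAddCommGroup E] [InnerProductSpace ℝ E] [FiniteDimensional ℝ E]
    [NormedAddCommGroup F]
    (f : E → ℝ) (hf : ConvexOn ℝ Set.univ f)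
    (lam ε : ℝ) (hlam : 0 < lam)
    (Lxx Lxy Lyx μy : ℝ) (hLxy : 0 ≤ Lxy)
    (Φ : E → F → ℝ)
    (hlipx : ∀ x x' : E, ∀ y y' : F,
      ‖gradient (fun z => Φ z y) x - gradient (fun z => Φ z y') x'‖ ≤
        Lxx * ‖x - x'‖ + Lxy * ‖y - y'‖)
    (ystar : E → F)
    (hystar : ∀ x x' : E, ‖ystar x - ystar x'‖ ≤ Lyx / μy * ‖x - x'‖)
    (φs : E → ℝ)
    (hgradφs : ∀ x : E, gradient φs x = gradient (fun z => Φ z (ystar x)) x)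
    (proxf : E → E)
    (hprox : ∀ z : E, IsMinOn (fun w => f w + 1 / (2 * lam) * ‖w - z‖ ^ 2) Set.univ (proxf z))
    (xε xhat : E)
    (hfix : xhat = proxf (xε - lam • gradient φs xhat))
    (hclose : ‖xε - xhat‖ ≤ lam * ε / 2) :
    ∀ xtil : E,
      1 / lam * ‖xtil - proxf (xtil - lam • gradient φs xtil)‖ ≤
        (2 / lam + Lxx + Lxy * Lyx / μy) * ‖xtil - xhat‖ + ε / 2 := by
  intro xtil
  have hproxf : LipschitzWith 1 proxf := lipschitzWith_one_of_isProxPoint hf hlam hprox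
  have hgrad (x x' : E) :
      ‖gradient φs x - gradient φs x'‖ ≤ (Lxx + Lxy * (Lyx / μy)) * ‖x - x'‖ := by
    rw [hgradφs, hgradφs]
    exact norm_sub_le_of_lipschitz_comp (G := fun x y => gradient (fun z => Φ z y) x)
      hLxy hlipx hystar x x'
  have hres := norm_sub_forwardBackward_le hproxf hgrad hlam.le hfix xtil
  calc 1 / lam * ‖xtil - proxf (xtil - lam • gradient φs xtil)‖
      ≤ 1 / lam * ((2 + lam * (Lxx + Lxy * (Lyx / μy))) * ‖xtil - xhat‖ + lam * ε / 2) := by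
        gcongr; linarith
    _ = (2 / lam + Lxx + Lxy * Lyx / μy) * ‖xtil - xhat‖ + ε / 2 := by
        field_simp; ring

/-- Bound on the generalized gradient mapping
`G_λ(x̃) = (1/λ)(x̃ − prox_{λf}(x̃ − λ∇φˢ(x̃)))` near the fixed point
`x̂ = prox_{λf}(x_ε − λ∇φˢ(x̂))` with `‖x_ε − x̂‖ ≤ λε/2`:
`(1/λ)‖x̃ − prox_{λf}(x̃ − λ∇φˢ(x̃))‖ ≤ (2/λ + L_xx + L_xy L_yx/μ_y)‖x̃ − x̂‖ + ε/2`. -/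
theorem generalized_gradient_mapping_bound
    {E F : Type*} [NormedAddCommGroup E] [InnerProductSpace ℝ E] [FiniteDimensional ℝ E]
    [NormedAddCommGroup F] [InnerProductSpace ℝ F] [FiniteDimensional ℝ F]
    (f : E → ℝ) (hf : ConvexOn ℝ Set.univ f) (hflsc : LowerSemicontinuous f)
    (lam ε : ℝ) (hlam : 0 < lam) (hε : 0 < ε)
    (Lxx Lxy Lyx μy : ℝ) (hLxx : 0 ≤ Lxx) (hLxy : 0 ≤ Lxy) (hLyx : 0 ≤ Lyx) (hμy : 0 < μy)
    (Φ : E → F → ℝ)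
    (hdx : ∀ y : F, Differentiable ℝ (fun x => Φ x y))
    (hlipx : ∀ x x' : E, ∀ y y' : F,
      ‖gradient (fun z => Φ z y) x - gradient (fun z => Φ z y') x'‖ ≤
        Lxx * ‖x - x'‖ + Lxy * ‖y - y'‖)
    (ystar : E → F)
    (hystar : ∀ x x' : E, ‖ystar x - ystar x'‖ ≤ Lyx / μy * ‖x - x'‖)
    (φs : E → ℝ) (hφs : Differentiable ℝ φs)
    (hgradφs : ∀ x : E, gradient φs x = gradient (fun z => Φ z (ystar x)) x)
    (proxf : E → E)
    (hprox : ∀ z : E, IsMinOn (fun w => f w + 1 / (2 * lam) * ‖w - z‖ ^ 2) Set.univ (proxf z))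
    (xε xhat : E)
    (hfix : xhat = proxf (xε - lam • gradient φs xhat))
    (hclose : ‖xε - xhat‖ ≤ lam * ε / 2) :
    ∀ xtil : E,
      1 / lam * ‖xtil - proxf (xtil - lam • gradient φs xtil)‖ ≤
        (2 / lam + Lxx + Lxy * Lyx / μy) * ‖xtil - xhat‖ + ε / 2 :=
  generalized_gradient_mapping_bound_general f hf lam ε hlam Lxx Lxy Lyx μy hLxy Φ hlipx ystar
    hystar φs hgradφs proxf hprox xε xhat hfix hclose
end

section
/- Let E, F be finite-dimensional real inner product spaces, Y ⊆ F a nonempty compact convex set with ‖y₁ − y₂‖ ≤ D for all y₁, y₂ ∈ Y (D > 0), g : F → ℝ convex, γ > 0, ε > 0, and let Φ : E × F → ℝ be differentiable with ‖∇_xΦ(x,y) − ∇_xΦ(x′,y′)‖ ≤ L_xx‖x−x′‖ + L_xy‖y−y′‖ and ‖∇_yΦ(x,y) − ∇_yΦ(x′,y′)‖ ≤ L_yx‖x−x′‖ + L_yy‖y−y′‖ for all x,x′ ∈ E and y,y′ ∈ Y, where L_xy, L_yy > 0. Assume that for each y ∈ Y the function Φ(·,y) is γ-weakly convex and for each x ∈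 E the function Φ(x,·) is concave. Let φ(x) = max_{y∈Y}(Φ(x,y) − g(y)), λ = 1/(2γ), and let φ_λ denote the Moreau envelope of φ. Fix ŷ₀ ∈ Y, set μ̂ = min{ ε²/(24·γ·D²), (L_yy/L_xy)·ε/(2·√6·D) }, Φ̂(x,y) = Φ(x,y) − (μ̂/2)‖y − ŷ₀‖², φ̂(x) = max_{y∈Y}(Φ̂(x,y) − g(y)), and let ŷ_*(x) be the unique maximizer over Y of y ↦ Φ̂(x,y) − g(y). Let x_ε ∈ E and assume φ̂ is differentiable at x_ε with ∇φ̂(x_ε) = ∇_xΦ(x_ε, ŷ_*(x_ε)) and ‖∇φ̂(x_ε)‖ ≤ ε/(2√6). Then ‖∇φ_λ(x_ε)‖ ≤ ε; equivalently, 2γ·‖x_ε − prox_{λφ}(x_ε)‖ ≤ ε. -/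
/-! Since `φ` is `γ`-weakly convex, the proximal subproblem `w ↦ φ w + γ‖w - x‖²` is
`γ`-strongly convex, so its minimiser `p` satisfies `φ x - φ p ≥ (3γ/2) r²` with `r = ‖x - p‖`.
The smoothed `φ̂` is `γ`-weakly convex too and differentiable at `x`, which gives
`φ̂ x - φ̂ p ≤ ‖∇φ̂ x‖ r + (γ/2) r²`; and `φ̂ ≤ φ ≤ φ̂ + μ̂D²/2` because `Y` has diameter `≤ D`.
Hence `γ r² ≤ ‖∇φ̂ x‖ r + μ̂D²/2`, and the choice of `μ̂` puts the positive root of this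
quadratic below `ε / (2γ)`. -/

open Set Filter Topology
open scoped RealInnerProductSpace

-- With `u = 2γr` the hypotheses give `(u - ε) (u + ε / 2) ≤ 0`.
lemma two_mul_le_of_mul_sq_le_mul_add {γ r b m ε : ℝ} (hγ : 0 < γ) (hb₀ : 0 ≤ b)
    (hb : 4 * b ≤ ε) (hm : 8 * γ * m ≤ ε ^ 2) (h : γ * r ^ 2 ≤ b * r + m) :
    2 * γ * r ≤ ε := by
  nlinarith

lemma le_add_of_isGreatest_image {ι : Type*} {s : Set ι} {f g : ι → ℝ} {a b c : ℝ}
    (ha : IsGreatest (f '' s) a) (hb : IsGreatest (g '' s) b) (h : ∀ i ∈ s, f i ≤ g i + c) :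
    a ≤ b + c := by
  obtain ⟨i, hi, rfl⟩ := ha.1
  exact (h i hi).trans (add_le_add_left (hb.2 ⟨i, hi, rfl⟩) c)

lemma ConvexOn.le_sub_of_hasFDerivAt {E : Type*} [NormedAddCommGroup E] [NormedSpace ℝ E]
    {s : Set E} {f : E → ℝ} {f' : E →L[ℝ] ℝ} {x y : E} (hf : ConvexOn ℝ s f) (hx : x ∈ s)
    (hy : y ∈ s) (h : HasFDerivAt f f' x) :
    f' (y - x) ≤ f y - f x := by
  set ℓ : ℝ →ᵃ[ℝ] E := AffineMap.lineMap x y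
  have hline : ConvexOn ℝ (ℓ ⁻¹' s) (f ∘ ℓ) := hf.comp_affineMap ℓ
  have hderiv : HasDerivAt (f ∘ ℓ) (f' (y - x)) 0 := by
    have h' : HasFDerivAt f f' (ℓ 0) := by simpa [ℓ] using h
    exact h'.comp_hasDerivAt 0 AffineMap.hasDerivAt_lineMap
  simpa [ℓ, slope_def_field] using
    hline.le_slope_of_hasDerivAt (by simpa [ℓ] using hx) (by simpa [ℓ] using hy) one_pos hderiv

section InnerProductSpace

variable {E : Type*} [NormedAddCommGroup E] [InnerProductSpace ℝ E] {s : Set E} {f : E → ℝ}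
  {γ : ℝ}

lemma sub_le_inner_add_of_convexOn_add_sq_norm [CompleteSpace E]
    (hf : ConvexOn ℝ s fun x => f x + γ / 2 * ‖x‖ ^ 2) {x y v : E} (hx : x ∈ s) (hy : y ∈ s)
    (h : HasGradientAt f v x) :
    f x - f y ≤ ⟪v, x - y⟫ + γ / 2 * ‖x - y‖ ^ 2 := by
  have hderiv := h.hasFDerivAt.add ((hasStrictFDerivAt_norm_sq x).hasFDerivAt.const_mul (γ / 2))
  have key := hf.le_sub_of_hasFDerivAt hx hy hderiv
  simp only [add_apply, smul_apply, InnerProductSpace.toDual_apply_apply, innerSL_apply_apply,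
    smul_eq_mul, nsmul_eq_mul, inner_sub_right, real_inner_self_eq_norm_sq] at key
  rw [norm_sub_sq_real, inner_sub_right]
  linarith

lemma strongConvexOn_add_mul_sq_norm_sub (hf : ConvexOn ℝ s fun x => f x + γ / 2 * ‖x‖ ^ 2)
    (c : ℝ) (x₀ : E) :
    StrongConvexOn s (2 * c - γ) fun x => f x + c * ‖x - x₀‖ ^ 2 := by
  rw [strongConvexOn_iff_convex]
  have hlin : ConvexOn ℝ s fun x => -(2 * c) * ⟪x₀, x⟫ + c * ‖x₀‖ ^ 2 :=
    (((-(2 * c)) • innerSL ℝ x₀).toLinearMap.convexOn hf.1).add_const _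
  refine (hf.add hlin).congr fun x _ => ?_
  simp only [Pi.add_apply, norm_sub_sq_real, real_inner_comm x₀ x]
  ring

lemma StrongConvexOn.mul_sq_norm_sub_le_of_isMinOn {m : ℝ} {x p : E}
    (hf : StrongConvexOn s m f) (hp : IsMinOn f s p) (hps : p ∈ s) (hx : x ∈ s) :
    m / 2 * ‖x - p‖ ^ 2 ≤ f x - f p := by
  have hseg : ∀ t ∈ Ioo (0 : ℝ) 1, (1 - t) * (m / 2 * ‖x - p‖ ^ 2) ≤ f x - f p := by
    intro t ⟨ht₀, ht₁⟩
    have hconv := hf.2 hx hps ht₀.le (sub_nonneg.2 ht₁.le) (add_sub_cancel t 1)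
    have hmin := isMinOn_iff.1 hp _ <| hf.1 hx hps ht₀.le (sub_nonneg.2 ht₁.le) (add_sub_cancel t 1)
    simp only [smul_eq_mul] at hconv
    refine le_of_mul_le_mul_left ?_ ht₀
    linarith
  have hlim : Tendsto (fun t : ℝ => (1 - t) * (m / 2 * ‖x - p‖ ^ 2)) (𝓝[>] 0)
      (𝓝 (m / 2 * ‖x - p‖ ^ 2)) := by
    have := ((continuous_const.sub continuous_id).mul continuous_const).tendsto (0 : ℝ)
      (f := fun t : ℝ => (1 - t) * (m / 2 * ‖x - p‖ ^ 2))
    simpa using this.mono_left nhdsWithin_le_nhds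
  exact le_of_tendsto hlim (eventually_of_mem (Ioo_mem_nhdsGT one_pos) hseg)

lemma le_sub_of_isMinOn_add_mul_sq_norm_sub (hf : ConvexOn ℝ s fun x => f x + γ / 2 * ‖x‖ ^ 2)
    {c : ℝ} {x₀ p : E} (hp : IsMinOn (fun x => f x + c * ‖x - x₀‖ ^ 2) s p) (hps : p ∈ s)
    (hx₀ : x₀ ∈ s) :
    (2 * c - γ / 2) * ‖x₀ - p‖ ^ 2 ≤ f x₀ - f p := by
  have h := (strongConvexOn_add_mul_sq_norm_sub hf c x₀).mul_sq_norm_sub_le_of_isMinOn hp hps hx₀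
  rw [sub_self, norm_zero, norm_sub_rev p x₀] at h
  linarith

lemma convexOn_of_isGreatest_image {ι : Type*} {I : Set ι} {F : ι → E → ℝ} {ψ : E → ℝ}
    (hs : Convex ℝ s) (hF : ∀ i ∈ I, ConvexOn ℝ s (F i))
    (hψ : ∀ x ∈ s, IsGreatest ((F · x) '' I) (ψ x)) :
    ConvexOn ℝ s ψ := by
  refine ⟨hs, fun x hx y hy a b ha hb hab => ?_⟩
  obtain ⟨i, hi, hψi⟩ := (hψ _ (hs hx hy ha hb hab)).1
  calc ψ (a • x + b • y) = F i (a • x + b • y) := hψi.symm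
    _ ≤ a • F i x + b • F i y := (hF i hi).2 hx hy ha hb hab
    _ ≤ a • ψ x + b • ψ y := by
      gcongr
      · exact (hψ x hx).2 ⟨i, hi, rfl⟩
      · exact (hψ y hy).2 ⟨i, hi, rfl⟩

lemma convexOn_add_sq_norm_of_isGreatest {ι : Type*} {I : Set ι} {Φ : E → ι → ℝ} {c : ι → ℝ}
    {ψ : E → ℝ} (hs : Convex ℝ s) (hΦ : ∀ i ∈ I, ConvexOn ℝ s fun x => Φ x i + γ / 2 * ‖x‖ ^ 2)
    (hψ : ∀ x ∈ s, IsGreatest ((fun i => Φ x i - c i) '' I) (ψ x)) :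
    ConvexOn ℝ s fun x => ψ x + γ / 2 * ‖x‖ ^ 2 := by
  refine convexOn_of_isGreatest_image (F := fun i x => Φ x i + γ / 2 * ‖x‖ ^ 2 + -c i) hs
    (fun i hi => (hΦ i hi).add_const _) fun x hx => ?_
  have h := (monotone_id.add_const (γ / 2 * ‖x‖ ^ 2)).map_isGreatest (hψ x hx)
  have hF : (fun i => Φ x i + γ / 2 * ‖x‖ ^ 2 + -c i) =
      fun i => id (Φ x i - c i) + γ / 2 * ‖x‖ ^ 2 := by
    funext i
    simp only [id]
    ring
  rwa [image_image, ← hF] at h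

end InnerProductSpace

theorem wcmc_smoothing_stationarity_general
    {E F : Type*} [NormedAddCommGroup E] [InnerProductSpace ℝ E] [FiniteDimensional ℝ E]
    [NormedAddCommGroup F]
    (Y : Set F)
    (D : ℝ) (hD : 0 < D) (hdiam : ∀ y₁ ∈ Y, ∀ y₂ ∈ Y, ‖y₁ - y₂‖ ≤ D)
    (g : F → ℝ)
    (γ ε : ℝ) (hγ : 0 < γ) (hε : 0 < ε)
    (Lxy Lyy : ℝ) (hLxy : 0 < Lxy) (hLyy : 0 < Lyy)
    (Φ : E → F → ℝ)
    (hwc : ∀ y ∈ Y, ConvexOn ℝ Set.univ (fun x => Φ x y + γ / 2 * ‖x‖ ^ 2))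
    (φ : E → ℝ)
    (hφ : ∀ x : E, IsGreatest ((fun y => Φ x y - g y) '' Y) (φ x))
    (yh₀ : F) (hyh₀ : yh₀ ∈ Y)
    (μhat : ℝ)
    (hμhat : μhat = min (ε ^ 2 / (24 * γ * D ^ 2)) (Lyy / Lxy * ε / (2 * Real.sqrt 6 * D)))
    (ystar : E → F)
    (φhat : E → ℝ)
    (hφhat : ∀ x : E,
      IsGreatest ((fun y => Φ x y - μhat / 2 * ‖y - yh₀‖ ^ 2 - g y) '' Y) (φhat x))
    (xε : E)
    (hgrad : HasGradientAt φhat (gradient (fun z => Φ z (ystar xε)) xε) xε)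
    (hsmall : ‖gradient (fun z => Φ z (ystar xε)) xε‖ ≤ ε / (2 * Real.sqrt 6)) :
    ∀ p : E,
      IsMinOn (fun w => φ w + 1 / (2 * (1 / (2 * γ))) * ‖w - xε‖ ^ 2) Set.univ p →
        2 * γ * ‖xε - p‖ ≤ ε := by
  intro p hp
  set v := gradient (fun z => Φ z (ystar xε)) xε
  have hμ₀ : 0 ≤ μhat := hμhat ▸ le_min (by positivity) (by positivity)
  have hμ : μhat * (24 * γ * D ^ 2) ≤ ε ^ 2 :=
    (le_div_iff₀ (by positivity)).1 (hμhat ▸ min_le_left _ _)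
  have hv : 4 * ‖v‖ ≤ ε := by
    have h6 : 2 ≤ Real.sqrt 6 := Real.le_sqrt_of_sq_le (by norm_num)
    have := (le_div_iff₀ (by positivity)).1 hsmall
    nlinarith
  have hφconv := convexOn_add_sq_norm_of_isGreatest convex_univ hwc fun x _ => hφ x
  have hφhatconv := convexOn_add_sq_norm_of_isGreatest
    (c := fun y => μhat / 2 * ‖y - yh₀‖ ^ 2 + g y) convex_univ hwc
    fun x _ => by simpa only [sub_sub] using hφhat x
  have hcoef : 1 / (2 * (1 / (2 * γ))) = γ := by field_simp
  have hprox : (2 * γ - γ / 2) * ‖xε - p‖ ^ 2 ≤ φ xε - φ p := by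
    simpa only [hcoef] using
      le_sub_of_isMinOn_add_mul_sq_norm_sub hφconv hp (mem_univ p) (mem_univ xε)
  have hhat : φhat xε - φhat p ≤ ⟪v, xε - p⟫ + γ / 2 * ‖xε - p‖ ^ 2 :=
    sub_le_inner_add_of_convexOn_add_sq_norm hφhatconv (mem_univ xε) (mem_univ p) hgrad
  have hφhat_le : φhat p ≤ φ p + 0 :=
    le_add_of_isGreatest_image (hφhat p) (hφ p) fun y _ => by nlinarith [sq_nonneg ‖y - yh₀‖]
  have hφ_le : φ xε ≤ φhat xε + μhat / 2 * D ^ 2 :=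
    le_add_of_isGreatest_image (hφ xε) (hφhat xε) fun y hy => by
      have := mul_le_mul_of_nonneg_left
        (pow_le_pow_left₀ (norm_nonneg _) (hdiam y hy yh₀ hyh₀) 2) hμ₀
      linarith
  refine two_mul_le_of_mul_sq_le_mul_add hγ (norm_nonneg v) hv (m := μhat / 2 * D ^ 2)
    (by nlinarith) ?_
  linarith [real_inner_le_norm v (xε - p)]

/-- Smoothing for weakly convex–merely concave problems: if `x_ε` is an
`ε/(2√6)`-stationary point of the smoothed primal function
`φ̂(x) = max_{y∈Y}(Φ(x,y) − (μ̂/2)‖y − ŷ₀‖² − g(y))` with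
`μ̂ = min{ε²/(24γD²), (L_yy/L_xy)·ε/(2√6·D)}`, then `x_ε` is `ε`-stationary for the
Moreau envelope of `φ(x) = max_{y∈Y}(Φ(x,y) − g(y))` with `λ = 1/(2γ)`:
`2γ‖x_ε − prox_{λφ}(x_ε)‖ ≤ ε`. -/
theorem wcmc_smoothing_stationarity
    {E F : Type*} [NormedAddCommGroup E] [InnerProductSpace ℝ E] [FiniteDimensional ℝ E]
    [NormedAddCommGroup F] [InnerProductSpace ℝ F] [FiniteDimensional ℝ F]
    (Y : Set F) (hYne : Y.Nonempty) (hYcomp : IsCompact Y) (hYconv : Convex ℝ Y)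
    (D : ℝ) (hD : 0 < D) (hdiam : ∀ y₁ ∈ Y, ∀ y₂ ∈ Y, ‖y₁ - y₂‖ ≤ D)
    (g : F → ℝ) (hg : ConvexOn ℝ Set.univ g)
    (γ ε : ℝ) (hγ : 0 < γ) (hε : 0 < ε)
    (Lxx Lxy Lyx Lyy : ℝ) (hLxy : 0 < Lxy) (hLyy : 0 < Lyy)
    (Φ : E → F → ℝ)
    (hΦdiff : Differentiable ℝ (fun p : E × F => Φ p.1 p.2))
    (hlipx : ∀ x x' : E, ∀ y ∈ Y, ∀ y' ∈ Y,
      ‖gradient (fun z => Φ z y) x - gradient (fun z => Φ z y') x'‖ ≤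
        Lxx * ‖x - x'‖ + Lxy * ‖y - y'‖)
    (hlipy : ∀ x x' : E, ∀ y ∈ Y, ∀ y' ∈ Y,
      ‖gradient (Φ x) y - gradient (Φ x') y'‖ ≤ Lyx * ‖x - x'‖ + Lyy * ‖y - y'‖)
    (hwc : ∀ y ∈ Y, ConvexOn ℝ Set.univ (fun x => Φ x y + γ / 2 * ‖x‖ ^ 2))
    (hconc : ∀ x : E, ConcaveOn ℝ Y (Φ x))
    (φ : E → ℝ)
    (hφ : ∀ x : E, IsGreatest ((fun y => Φ x y - g y) '' Y) (φ x))
    (yh₀ : F) (hyh₀ : yh₀ ∈ Y)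
    (μhat : ℝ)
    (hμhat : μhat = min (ε ^ 2 / (24 * γ * D ^ 2)) (Lyy / Lxy * ε / (2 * Real.sqrt 6 * D)))
    (ystar : E → F)
    (hystarY : ∀ x : E, ystar x ∈ Y)
    (hystar : ∀ x : E, IsMaxOn (fun y => Φ x y - μhat / 2 * ‖y - yh₀‖ ^ 2 - g y) Y (ystar x))
    (φhat : E → ℝ)
    (hφhat : ∀ x : E,
      IsGreatest ((fun y => Φ x y - μhat / 2 * ‖y - yh₀‖ ^ 2 - g y) '' Y) (φhat x))
    (xε : E)
    (hgrad : HasGradientAt φhat (gradient (fun z => Φ z (ystar xε)) xε) xε)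
    (hsmall : ‖gradient (fun z => Φ z (ystar xε)) xε‖ ≤ ε / (2 * Real.sqrt 6)) :
    ∀ p : E,
      IsMinOn (fun w => φ w + 1 / (2 * (1 / (2 * γ))) * ‖w - xε‖ ^ 2) Set.univ p →
        2 * γ * ‖xε - p‖ ≤ ε :=
  wcmc_smoothing_stationarity_general Y D hD hdiam g γ ε hγ hε Lxy Lyy hLxy hLyy Φ hwc φ hφ yh₀ hyh₀
    μhat hμhat ystar φhat hφhat xε hgrad hsmall
end
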